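/- Let S ⊆ C and T ⊆ D be hyperrigid operator subsystems of unital C*-algebras. Then the operator system S ⊗_min T is hyperrigid in C ⊗_min D: every ucp map ρ : C ⊗_min D → B(H) agreeing with a unital *-representation π on S ⊗_min T equals π. -/

import Mathlib

open Matrix
open scoped TensorProduct

noncomputable section

def MatPos {R : Type*} [Ring R] [StarRing R] {ι : Type*} [Fintype ι]
    (M : Matrix ι ι R) : Prop :=
  ∃ B : Matrix ι ι R, M = star B * B

def IsUCPMap {A B : Type*} [Ring A] [StarRing A] [Module ℂ A]
    [Ring B] [StarRing B] [Module ℂ B] (φ : A →ₗ[ℂ] B) : Prop :=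
  φ 1 = 1 ∧
  ∀ (n : ℕ) (M : Matrix (Fin n) (Fin n) A), MatPos M → MatPos (M.map ⇑φ)

/-- `X ⊆ D` is hyperrigid in `D`. -/
def HyperrigidUCP.{v} {D : Type*} [Ring D] [StarRing D] [Algebra ℂ D]
    (X : Set D) : Prop :=
  ∀ (H : Type v) [NormedAddCommGroup H] [InnerProductSpace ℂ H] [CompleteSpace H]
    (π : D →⋆ₐ[ℂ] (H →L[ℂ] H)) (ψ : D →ₗ[ℂ] (H →L[ℂ] H)),
    IsUCPMap ψ → (∀ x ∈ X, ψ x = π x) → ∀ d : D, ψ d = π d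

/-- The map `φ ⊗ ψ : A ⊗ B → M_k ⊗ M_m = M_{km}` induced by matrix-valued maps. -/
def kronApp {A B : Type*} [Ring A] [Module ℂ A] [Ring B] [Module ℂ B] {k m : ℕ}
    (φ : A →ₗ[ℂ] Matrix (Fin k) (Fin k) ℂ) (ψ : B →ₗ[ℂ] Matrix (Fin m) (Fin m) ℂ) :
    A ⊗[ℂ] B →ₗ[ℂ] Matrix (Fin k × Fin m) (Fin k × Fin m) ℂ :=
  TensorProduct.lift ((Matrix.kroneckerMapBilinear (LinearMap.mul ℂ ℂ)).compl₁₂ φ ψ)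

/-- Positivity in `Mₙ(C ⊗min D)`, detected by pairs of ucp maps into matrix algebras
(the Kavruk–Paulsen–Todorov–Tomforde description of the minimal operator system tensor
product). -/
def MinPos {C D : Type*} [Ring C] [StarRing C] [Module ℂ C]
    [Ring D] [StarRing D] [Module ℂ D]
    {n : ℕ} (M : Matrix (Fin n) (Fin n) (C ⊗[ℂ] D)) : Prop :=
  ∀ (k m : ℕ) (φ : C →ₗ[ℂ] Matrix (Fin k) (Fin k) ℂ)
    (ψ : D →ₗ[ℂ] Matrix (Fin m) (Fin m) ℂ),
    IsUCPMap φ → IsUCPMap ψ → MatPos (M.map ⇑(kronApp φ ψ))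

namespace HypAux

open scoped Kronecker ComplexOrder

/-! ### Flattening nested matrices -/

def flatM {ι κ : Type*} (M : Matrix ι ι (Matrix κ κ ℂ)) : Matrix (ι × κ) (ι × κ) ℂ :=
  Matrix.of fun p q => M p.1 q.1 p.2 q.2

lemma flatM_mul {ι κ : Type*} [Fintype ι] [Fintype κ] (M N : Matrix ι ι (Matrix κ κ ℂ)) :
    flatM (M * N) = flatM M * flatM N := by
  ext ⟨i, a⟩ ⟨j, b⟩
  simp [flatM, Matrix.mul_apply, Matrix.sum_apply, Fintype.sum_prod_type]

lemma flatM_star {ι κ : Type*} (M : Matrix ι ι (Matrix κ κ ℂ)) :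
    flatM (star M) = star (flatM M) := by
  ext ⟨i, a⟩ ⟨j, b⟩
  simp [flatM, Matrix.star_apply]

lemma flatM_inj {ι κ : Type*} {M N : Matrix ι ι (Matrix κ κ ℂ)}
    (h : flatM M = flatM N) : M = N := by
  ext i j a b
  exact congrFun (congrFun h (i, a)) (j, b)

lemma matPos_iff_flat {ι κ : Type*} [Fintype ι] [Fintype κ] [DecidableEq ι] [DecidableEq κ]
    (M : Matrix ι ι (Matrix κ κ ℂ)) : MatPos M ↔ (flatM M).PosSemidef := by
  constructor
  · rintro ⟨B, rfl⟩
    rw [flatM_mul, flatM_star, Matrix.star_eq_conjTranspose]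
    exact Matrix.posSemidef_conjTranspose_mul_self _
  · intro h
    obtain ⟨G, hG⟩ := (by open scoped MatrixOrder in obtain ⟨G, hG⟩ := CStarAlgebra.nonneg_iff_eq_star_mul_self.mp h.nonneg; exact ⟨G, hG⟩ : ∃ G : Matrix _ _ ℂ, flatM M = Gᴴ * G)
    set U : Matrix ι ι (Matrix κ κ ℂ) :=
      Matrix.of fun i j => Matrix.of fun a b => G (i, a) (j, b) with hU
    have hUG : flatM U = G := by ext ⟨i, a⟩ ⟨j, b⟩; rfl
    exact ⟨U, flatM_inj (by rw [flatM_mul, flatM_star, hUG, Matrix.star_eq_conjTranspose, ← hG])⟩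

lemma psd_mix {ι κ₁ κ₂ : Type*} [Fintype ι] [Fintype κ₁] [Fintype κ₂]
    [DecidableEq ι] [DecidableEq κ₁] [DecidableEq κ₂]
    {X : Matrix (ι × κ₁) (ι × κ₁) ℂ} {Y : Matrix (ι × κ₂) (ι × κ₂) ℂ}
    (hX : X.PosSemidef) (hY : Y.PosSemidef) :
    (Matrix.of fun p q : ι × (κ₁ × κ₂) =>
      X (p.1, p.2.1) (q.1, q.2.1) * Y (p.1, p.2.2) (q.1, q.2.2)).PosSemidef := by
  obtain ⟨P, hP⟩ := (by open scoped MatrixOrder in obtain ⟨G, hG⟩ := CStarAlgebra.nonneg_iff_eq_star_mul_self.mp hX.nonneg; exact ⟨G, hG⟩ : ∃ G : Matrix _ _ ℂ, X = Gᴴ * G)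
  obtain ⟨Q, hQ⟩ := (by open scoped MatrixOrder in obtain ⟨G, hG⟩ := CStarAlgebra.nonneg_iff_eq_star_mul_self.mp hY.nonneg; exact ⟨G, hG⟩ : ∃ G : Matrix _ _ ℂ, Y = Gᴴ * G)
  have key : (Matrix.of fun p q : ι × (κ₁ × κ₂) =>
      X (p.1, p.2.1) (q.1, q.2.1) * Y (p.1, p.2.2) (q.1, q.2.2))
      = (Matrix.of fun (st : (ι × κ₁) × (ι × κ₂)) (p : ι × (κ₁ × κ₂)) =>
          P st.1 (p.1, p.2.1) * Q st.2 (p.1, p.2.2))ᴴ *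
        (Matrix.of fun (st : (ι × κ₁) × (ι × κ₂)) (p : ι × (κ₁ × κ₂)) =>
          P st.1 (p.1, p.2.1) * Q st.2 (p.1, p.2.2)) := by
    ext ⟨i, a, b⟩ ⟨j, u, v⟩
    rw [hP, hQ]
    simp only [Matrix.of_apply, Matrix.mul_apply, Matrix.conjTranspose_apply, star_mul']
    rw [Finset.sum_mul_sum]
    conv_rhs => rw [Fintype.sum_prod_type]
    exact Finset.sum_congr rfl fun s _ => Finset.sum_congr rfl fun t _ => by ring
  rw [key]
  exact Matrix.posSemidef_conjTranspose_mul_self _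

lemma matPos_kron {n k m : ℕ} {A : Matrix (Fin n) (Fin n) (Matrix (Fin k) (Fin k) ℂ)}
    {B : Matrix (Fin n) (Fin n) (Matrix (Fin m) (Fin m) ℂ)}
    (hA : MatPos A) (hB : MatPos B) :
    MatPos (Matrix.of fun i j => A i j ⊗ₖ B i j) := by
  rw [matPos_iff_flat] at hA hB ⊢
  have heq : flatM (Matrix.of fun i j => A i j ⊗ₖ B i j)
      = Matrix.of fun p q : Fin n × (Fin k × Fin m) =>
          flatM A (p.1, p.2.1) (q.1, q.2.1) * flatM B (p.1, p.2.2) (q.1, q.2.2) := by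
    ext ⟨i, a, b⟩ ⟨j, u, v⟩; rfl
  rw [heq]
  exact psd_mix hA hB

/-! ### Generalities on `MatPos` -/

lemma gram_matPos {R : Type*} [Ring R] [StarRing R] {ι : Type*} [Fintype ι] [DecidableEq ι]
    (c : ι → R) : MatPos (Matrix.of fun i j => star (c i) * c j) := by
  cases isEmpty_or_nonempty ι with
  | inl h => exact ⟨0, by ext i j; exact h.elim i⟩
  | inr h =>
    obtain ⟨i₀⟩ := h
    refine ⟨Matrix.of fun i j => if i = i₀ then c j else 0, ?_⟩
    ext i j
    simp [Matrix.mul_apply, Matrix.star_apply, apply_ite, Finset.sum_ite_eq]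

lemma matPos_map {R R' : Type*} [Ring R] [StarRing R] [Ring R'] [StarRing R']
    {ι : Type*} [Fintype ι] (f : R →+* R') (hf : ∀ x, f (star x) = star (f x))
    {M : Matrix ι ι R} (h : MatPos M) : MatPos (M.map ⇑f) := by
  obtain ⟨B, rfl⟩ := h
  refine ⟨B.map ⇑f, ?_⟩
  ext i j
  simp [Matrix.map_apply, Matrix.mul_apply, Matrix.star_apply, map_sum, hf]

/-- `X ↦ X ⊗ₖ 1` as a ring hom. -/
def kronRight (k m : ℕ) :
    Matrix (Fin k) (Fin k) ℂ →+* Matrix (Fin k × Fin m) (Fin k × Fin m) ℂ where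
  toFun X := X ⊗ₖ (1 : Matrix (Fin m) (Fin m) ℂ)
  map_one' := Matrix.one_kronecker_one
  map_mul' X Y := by rw [← Matrix.mul_kronecker_mul, one_mul]
  map_zero' := Matrix.zero_kronecker _
  map_add' X Y := Matrix.add_kronecker _ _ _

lemma kronRight_star (k m : ℕ) (X : Matrix (Fin k) (Fin k) ℂ) :
    kronRight k m (star X) = star (kronRight k m X) := by
  ext ⟨a, b⟩ ⟨u, v⟩
  by_cases hbv : b = v <;>
    simp [kronRight, Matrix.star_apply, Matrix.one_apply, hbv, Ne.symm, eq_comm]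

/-- `X ↦ 1 ⊗ₖ X` as a ring hom. -/
def kronLeft (k m : ℕ) :
    Matrix (Fin m) (Fin m) ℂ →+* Matrix (Fin k × Fin m) (Fin k × Fin m) ℂ where
  toFun X := (1 : Matrix (Fin k) (Fin k) ℂ) ⊗ₖ X
  map_one' := Matrix.one_kronecker_one
  map_mul' X Y := by rw [← Matrix.mul_kronecker_mul, one_mul]
  map_zero' := Matrix.kronecker_zero _
  map_add' X Y := Matrix.kronecker_add _ _ _

lemma kronLeft_star (k m : ℕ) (X : Matrix (Fin m) (Fin m) ℂ) :
    kronLeft k m (star X) = star (kronLeft k m X) := by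
  ext ⟨a, b⟩ ⟨u, v⟩
  by_cases hau : a = u <;>
    simp [kronLeft, Matrix.star_apply, Matrix.one_apply, hau, Ne.symm, eq_comm]

lemma kronApp_tmul {A B : Type*} [Ring A] [Module ℂ A] [Ring B] [Module ℂ B] {k m : ℕ}
    (φ : A →ₗ[ℂ] Matrix (Fin k) (Fin k) ℂ) (ψ : B →ₗ[ℂ] Matrix (Fin m) (Fin m) ℂ)
    (x : A) (y : B) : kronApp φ ψ (x ⊗ₜ[ℂ] y) = (φ x) ⊗ₖ (ψ y) := by
  ext ⟨a, b⟩ ⟨u, v⟩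
  simp [kronApp, Matrix.kroneckerMapBilinear_apply_apply, Matrix.kroneckerMap_apply]

/-! ### `MinPos` producers -/

lemma minPos_gram {C D : Type*} [Ring C] [StarRing C] [Module ℂ C]
    [Ring D] [StarRing D] [Module ℂ D] {n : ℕ} (c : Fin n → C) (d : Fin n → D) :
    MinPos (Matrix.of fun i j => (star (c i) * c j) ⊗ₜ[ℂ] (star (d i) * d j)) := by
  intro k m φ ψ hφ hψ
  have hA := hφ.2 n _ (gram_matPos c)
  have hB := hψ.2 n _ (gram_matPos d)
  have heq : (Matrix.of fun i j =>
        (star (c i) * c j) ⊗ₜ[ℂ] (star (d i) * d j)).map ⇑(kronApp φ ψ)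
      = Matrix.of fun i j => ((Matrix.of fun i j => star (c i) * c j).map ⇑φ) i j ⊗ₖ
          ((Matrix.of fun i j => star (d i) * d j).map ⇑ψ) i j := by
    ext i j
    simp [Matrix.map_apply, kronApp_tmul]
  rw [heq]
  exact matPos_kron hA hB

lemma minPos_right {C D : Type*} [Ring C] [StarRing C] [Module ℂ C]
    [Ring D] [StarRing D] [Module ℂ D] {n : ℕ} {M : Matrix (Fin n) (Fin n) C}
    (hM : MatPos M) : MinPos (M.map fun c => c ⊗ₜ[ℂ] (1 : D)) := by
  intro k m φ ψ hφ hψ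
  rw [Matrix.map_map]
  have heq : (⇑(kronApp φ ψ) ∘ fun c => c ⊗ₜ[ℂ] (1 : D)) = ⇑(kronRight k m) ∘ ⇑φ := by
    funext x
    simp [Function.comp, kronApp_tmul, hψ.1, kronRight]
  rw [heq, ← Matrix.map_map]
  exact matPos_map (kronRight k m) (kronRight_star k m) (hφ.2 n M hM)

lemma minPos_left {C D : Type*} [Ring C] [StarRing C] [Module ℂ C]
    [Ring D] [StarRing D] [Module ℂ D] {n : ℕ} {M : Matrix (Fin n) (Fin n) D}
    (hM : MatPos M) : MinPos (M.map fun d => (1 : C) ⊗ₜ[ℂ] d) := by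
  intro k m φ ψ hφ hψ
  rw [Matrix.map_map]
  have heq : (⇑(kronApp φ ψ) ∘ fun d => (1 : C) ⊗ₜ[ℂ] d) = ⇑(kronLeft k m) ∘ ⇑ψ := by
    funext x
    simp [Function.comp, kronApp_tmul, hφ.1, kronLeft]
  rw [heq, ← Matrix.map_map]
  exact matPos_map (kronLeft k m) (kronLeft_star k m) (hψ.2 n M hM)

/-- In `B(H)`, if a finite sum `∑ wᵢ* wᵢ` vanishes then each `wᵢ` vanishes. -/
lemma sum_star_mul_self_eq_zero {ι : Type*} [Fintype ι] {H : Type*} [NormedAddCommGroup H]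
    [InnerProductSpace ℂ H] [CompleteSpace H] {w : ι → H →L[ℂ] H}
    (h : ∑ l, star (w l) * w l = 0) : ∀ l, w l = 0 := by
  intro l
  ext v
  have h1 : ∑ l, (inner ℂ ((star (w l) * w l) v) v : ℂ) = 0 := by
    rw [← sum_inner]
    have hz : (∑ l, star (w l) * w l) v = 0 := by rw [h]; rfl
    rw [← ContinuousLinearMap.sum_apply, hz, inner_zero_left]
  have h2 : ∀ l, (inner ℂ ((star (w l) * w l) v) v : ℂ) = (‖w l v‖ : ℂ) ^ 2 := by
    intro l
    rw [ContinuousLinearMap.mul_apply, ContinuousLinearMap.star_eq_adjoint,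
      ContinuousLinearMap.adjoint_inner_left, inner_self_eq_norm_sq_to_K]
    norm_cast
  rw [Finset.sum_congr rfl fun l _ => h2 l] at h1
  have h3 : ∑ l, (‖w l v‖ : ℝ) ^ 2 = 0 := by
    have := congrArg Complex.re h1
    simpa [Complex.re_sum, ← Complex.ofReal_pow] using this
  have h4 : (‖w l v‖ : ℝ) ^ 2 = 0 :=
    (Finset.sum_eq_zero_iff_of_nonneg (fun i _ => sq_nonneg _)).mp h3 l (Finset.mem_univ l)
  have h5 : ‖w l v‖ = 0 := by nlinarith [sq_nonneg ‖w l v‖]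
  simpa using h5

end HypAux

set_option maxHeartbeats 1000000 in
theorem min_tensor_hyperrigid.{v}
    {C : Type*} [NormedRing C] [StarRing C] [CStarRing C] [NormedAlgebra ℂ C]
    [StarModule ℂ C] [CompleteSpace C]
    {D : Type*} [NormedRing D] [StarRing D] [CStarRing D] [NormedAlgebra ℂ D]
    [StarModule ℂ D] [CompleteSpace D]
    (S : Submodule ℂ C) (hS1 : (1 : C) ∈ S) (hSstar : ∀ x ∈ S, star x ∈ S)
    (T : Submodule ℂ D) (hT1 : (1 : D) ∈ T) (hTstar : ∀ x ∈ T, star x ∈ T)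
    (hShyp : HyperrigidUCP.{v} (S : Set C))
    (hThyp : HyperrigidUCP.{v} (T : Set D))
    (H : Type v) [NormedAddCommGroup H] [InnerProductSpace ℂ H] [CompleteSpace H]
    -- a unital *-representation of `C ⊗min D`:
    (π : C ⊗[ℂ] D →ₐ[ℂ] (H →L[ℂ] H))
    (hπstar : ∀ (c : C) (d : D), π (star c ⊗ₜ star d) = star (π (c ⊗ₜ d)))
    (hπmin : ∀ (n : ℕ) (M : Matrix (Fin n) (Fin n) (C ⊗[ℂ] D)),
      MinPos M → MatPos (M.map ⇑π.toLinearMap))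
    -- a ucp map on `C ⊗min D`:
    (ρ : C ⊗[ℂ] D →ₗ[ℂ] (H →L[ℂ] H)) (hρ1 : ρ 1 = 1)
    (hρcp : ∀ (n : ℕ) (M : Matrix (Fin n) (Fin n) (C ⊗[ℂ] D)),
      MinPos M → MatPos (M.map ⇑ρ))
    -- agreeing with `π` on `S ⊗min T`:
    (hagree : ∀ s ∈ S, ∀ t ∈ T, ρ (s ⊗ₜ t) = π (s ⊗ₜ t)) :
    ∀ u : C ⊗[ℂ] D, ρ u = π u := by
  classical
  -- Step 1a: `ρ` and `π` agree on `C ⊗ 1`.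
  have step1C : ∀ c : C, ρ (c ⊗ₜ[ℂ] (1 : D)) = π (c ⊗ₜ[ℂ] (1 : D)) := by
    let e : C →ₗ[ℂ] C ⊗[ℂ] D := (TensorProduct.mk ℂ C D).flip 1
    have he : ∀ c : C, e c = c ⊗ₜ[ℂ] (1 : D) := fun c => rfl
    let ψC : C →ₗ[ℂ] (H →L[ℂ] H) := ρ.comp e
    have hψC : IsUCPMap ψC := by
      constructor
      · show ρ ((1 : C) ⊗ₜ[ℂ] (1 : D)) = 1
        rw [← Algebra.TensorProduct.one_def, hρ1]
      · intro n M hM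
        have hmm : M.map ⇑ψC = (M.map fun c => c ⊗ₜ[ℂ] (1 : D)).map ⇑ρ := by
          rw [Matrix.map_map]; rfl
        rw [hmm]
        exact hρcp n _ (HypAux.minPos_right hM)
    let πC : C →⋆ₐ[ℂ] (H →L[ℂ] H) :=
      { toFun := fun c => π (c ⊗ₜ[ℂ] (1 : D))
        map_one' := by
          show π ((1 : C) ⊗ₜ[ℂ] (1 : D)) = 1
          rw [← Algebra.TensorProduct.one_def, _root_.map_one]
        map_mul' := fun x y => by
          show π ((x * y) ⊗ₜ[ℂ] (1 : D)) = π (x ⊗ₜ[ℂ] (1 : D)) * π (y ⊗ₜ[ℂ] (1 : D))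
          rw [← _root_.map_mul, Algebra.TensorProduct.tmul_mul_tmul, one_mul]
        map_zero' := by
          show π ((0 : C) ⊗ₜ[ℂ] (1 : D)) = 0
          rw [TensorProduct.zero_tmul, _root_.map_zero]
        map_add' := fun x y => by
          show π ((x + y) ⊗ₜ[ℂ] (1 : D)) = π (x ⊗ₜ[ℂ] (1 : D)) + π (y ⊗ₜ[ℂ] (1 : D))
          rw [TensorProduct.add_tmul, _root_.map_add]
        commutes' := fun r => by
          show π ((algebraMap ℂ C r) ⊗ₜ[ℂ] (1 : D)) = algebraMap ℂ (H →L[ℂ] H) r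
          rw [← Algebra.TensorProduct.algebraMap_apply, AlgHom.commutes]
        map_star' := fun x => by
          show π ((star x) ⊗ₜ[ℂ] (1 : D)) = star (π (x ⊗ₜ[ℂ] (1 : D)))
          have := hπstar x 1; rwa [star_one] at this }
    have hag : ∀ x ∈ (S : Set C), ψC x = πC x := fun s hs => hagree s hs 1 hT1
    exact fun c => hShyp H πC ψC hψC hag c
  -- Step 1b: `ρ` and `π` agree on `1 ⊗ D`.
  have step1D : ∀ d : D, ρ ((1 : C) ⊗ₜ[ℂ] d) = π ((1 : C) ⊗ₜ[ℂ] d) := by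
    let e : D →ₗ[ℂ] C ⊗[ℂ] D := TensorProduct.mk ℂ C D 1
    have he : ∀ d : D, e d = (1 : C) ⊗ₜ[ℂ] d := fun d => rfl
    let ψD : D →ₗ[ℂ] (H →L[ℂ] H) := ρ.comp e
    have hψD : IsUCPMap ψD := by
      constructor
      · show ρ ((1 : C) ⊗ₜ[ℂ] (1 : D)) = 1
        rw [← Algebra.TensorProduct.one_def, hρ1]
      · intro n M hM
        have hmm : M.map ⇑ψD = (M.map fun d => (1 : C) ⊗ₜ[ℂ] d).map ⇑ρ := by
          rw [Matrix.map_map]; rfl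
        rw [hmm]
        exact hρcp n _ (HypAux.minPos_left hM)
    let πD : D →⋆ₐ[ℂ] (H →L[ℂ] H) :=
      { toFun := fun d => π ((1 : C) ⊗ₜ[ℂ] d)
        map_one' := by
          show π ((1 : C) ⊗ₜ[ℂ] (1 : D)) = 1
          rw [← Algebra.TensorProduct.one_def, _root_.map_one]
        map_mul' := fun x y => by
          show π ((1 : C) ⊗ₜ[ℂ] (x * y)) = π ((1 : C) ⊗ₜ[ℂ] x) * π ((1 : C) ⊗ₜ[ℂ] y)
          rw [← _root_.map_mul, Algebra.TensorProduct.tmul_mul_tmul, one_mul]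
        map_zero' := by
          show π ((1 : C) ⊗ₜ[ℂ] (0 : D)) = 0
          rw [TensorProduct.tmul_zero, _root_.map_zero]
        map_add' := fun x y => by
          show π ((1 : C) ⊗ₜ[ℂ] (x + y)) = π ((1 : C) ⊗ₜ[ℂ] x) + π ((1 : C) ⊗ₜ[ℂ] y)
          rw [TensorProduct.tmul_add, _root_.map_add]
        commutes' := fun r => by
          show π ((1 : C) ⊗ₜ[ℂ] (algebraMap ℂ D r)) = algebraMap ℂ (H →L[ℂ] H) r
          rw [← Algebra.TensorProduct.algebraMap_apply', AlgHom.commutes]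
        map_star' := fun x => by
          show π ((1 : C) ⊗ₜ[ℂ] (star x)) = star (π ((1 : C) ⊗ₜ[ℂ] x))
          have := hπstar 1 x; rwa [star_one] at this }
    have hag : ∀ x ∈ (T : Set D), ψD x = πD x := fun t ht => hagree 1 hS1 t ht
    exact fun d => hThyp H πD ψD hψD hag d
  -- Step 2: the multiplicative-domain argument.
  have main : ∀ (c : C) (d : D),
      ρ (star c ⊗ₜ[ℂ] d) = π (star c ⊗ₜ[ℂ] d) := by
    intro c d
    set cv : Fin 3 → C := ![1, c, 1] with hcv
    set dv : Fin 3 → D := ![1, 1, d] with hdv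
    set M : Matrix (Fin 3) (Fin 3) (C ⊗[ℂ] D) :=
      Matrix.of fun i j => (star (cv i) * cv j) ⊗ₜ[ℂ] (star (dv i) * dv j) with hM
    obtain ⟨G, hG⟩ := hρcp 3 M (HypAux.minPos_gram cv dv)
    have hentry : ∀ i j,
        ρ ((star (cv i) * cv j) ⊗ₜ[ℂ] (star (dv i) * dv j)) = ∑ l, star (G l i) * G l j := by
      intro i j
      have h := congrFun (congrFun hG i) j
      simpa [hM, Matrix.map_apply, Matrix.mul_apply, Matrix.star_apply] using h
    have h00 : ∑ l, star (G l 0) * G l 0 = 1 := by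
      have h := (hentry 0 0).symm
      simpa [hcv, hdv, ← Algebra.TensorProduct.one_def, hρ1] using h
    have h01 : ∑ l, star (G l 0) * G l 1 = π (c ⊗ₜ[ℂ] (1 : D)) := by
      have h := (hentry 0 1).symm
      simpa [hcv, hdv, step1C c] using h
    have h10 : ∑ l, star (G l 1) * G l 0 = star (π (c ⊗ₜ[ℂ] (1 : D))) := by
      have h := congrArg star h01
      rw [star_sum] at h
      rw [← h]
      exact Finset.sum_congr rfl fun l _ => by rw [StarMul.star_mul, star_star]
    have hπsc : π (star c ⊗ₜ[ℂ] (1 : D)) = star (π (c ⊗ₜ[ℂ] (1 : D))) := by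
      have := hπstar c 1; rwa [star_one] at this
    have h11 : ∑ l, star (G l 1) * G l 1
        = star (π (c ⊗ₜ[ℂ] (1 : D))) * π (c ⊗ₜ[ℂ] (1 : D)) := by
      have h := (hentry 1 1).symm
      have hπ2 : π ((star c * c) ⊗ₜ[ℂ] (1 : D))
          = star (π (c ⊗ₜ[ℂ] (1 : D))) * π (c ⊗ₜ[ℂ] (1 : D)) := by
        have hm : ((star c) ⊗ₜ[ℂ] (1 : D)) * (c ⊗ₜ[ℂ] (1 : D))
            = (star c * c) ⊗ₜ[ℂ] (1 : D) := by
          rw [Algebra.TensorProduct.tmul_mul_tmul, one_mul]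
        rw [← hm, _root_.map_mul, hπsc]
      simpa [hcv, hdv, step1C (star c * c), hπ2] using h
    have h02 : ∑ l, star (G l 0) * G l 2 = π ((1 : C) ⊗ₜ[ℂ] d) := by
      have h := (hentry 0 2).symm
      simpa [hcv, hdv, Matrix.cons_val_two, Matrix.head_cons, Matrix.tail_cons,
        step1D d] using h
    have h12 : ∑ l, star (G l 1) * G l 2 = ρ ((star c) ⊗ₜ[ℂ] d) := by
      have h := (hentry 1 2).symm
      simpa [hcv, hdv, Matrix.cons_val_two, Matrix.head_cons, Matrix.tail_cons] using h
    -- the column trick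
    set A : H →L[ℂ] H := π (c ⊗ₜ[ℂ] (1 : D)) with hA
    have key : ∑ l, star (G l 1 - G l 0 * A) * (G l 1 - G l 0 * A) = 0 := by
      have expand : ∀ l : Fin 3,
          star (G l 1 - G l 0 * A) * (G l 1 - G l 0 * A)
          = star (G l 1) * G l 1
            - (star (G l 1) * G l 0) * A
            - star A * (star (G l 0) * G l 1)
            + star A * ((star (G l 0) * G l 0) * A) := by
        intro l
        simp only [star_sub, StarMul.star_mul]
        noncomm_ring
      have e1 : ∑ l, star (G l 1 - G l 0 * A) * (G l 1 - G l 0 * A)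
          = (∑ l, star (G l 1) * G l 1)
            - (∑ l, star (G l 1) * G l 0) * A
            - star A * (∑ l, star (G l 0) * G l 1)
            + star A * ((∑ l, star (G l 0) * G l 0) * A) := by
        rw [Finset.sum_congr rfl fun l _ => expand l]
        rw [Finset.sum_add_distrib, Finset.sum_sub_distrib, Finset.sum_sub_distrib,
          Finset.sum_mul, Finset.sum_mul, Finset.mul_sum, Finset.mul_sum]
      rw [e1, h11, h10, h01, h00]
      noncomm_ring
    have hZ : ∀ l, G l 1 = G l 0 * A := fun l =>
      sub_eq_zero.mp (HypAux.sum_star_mul_self_eq_zero key l)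
    have hfin : ρ ((star c) ⊗ₜ[ℂ] d) = star A * π ((1 : C) ⊗ₜ[ℂ] d) := by
      rw [← h12]
      calc ∑ l, star (G l 1) * G l 2
          = ∑ l, star A * (star (G l 0) * G l 2) := by
            refine Finset.sum_congr rfl fun l _ => ?_
            rw [hZ l, StarMul.star_mul, mul_assoc]
        _ = star A * ∑ l, star (G l 0) * G l 2 := by rw [Finset.mul_sum]
        _ = _ := by rw [h02]
    have hπfin : π ((star c) ⊗ₜ[ℂ] d) = star A * π ((1 : C) ⊗ₜ[ℂ] d) := by
      have hm : ((star c) ⊗ₜ[ℂ] (1 : D)) * ((1 : C) ⊗ₜ[ℂ] d) = (star c) ⊗ₜ[ℂ] d := by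
        rw [Algebra.TensorProduct.tmul_mul_tmul, mul_one, one_mul]
      rw [← hm, _root_.map_mul, hπsc]
    rw [hfin, hπfin]
  have key : ∀ (c : C) (d : D), ρ (c ⊗ₜ[ℂ] d) = π (c ⊗ₜ[ℂ] d) := by
    intro c d
    simpa using main (star c) d
  intro u
  induction u using TensorProduct.induction_on with
  | zero => simp
  | tmul c d => exact key c d
  | add x y hx hy => rw [map_add, map_add, hx, hy]

end
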